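/- arXiv:2201.10229 — 2 statements merged into one kernel-verified Lean document; each statement's English description precedes it below -/
import Mathlib

section
/- Let p be an odd prime and d ≥ 2. Then the number ν(d−1,d) of (d−1)-dimensional subspaces U of the d-dimensional hermitian space V over 𝔽_{p²} with U^⊥ ⊆ U satisfies ν(d−1,d) · (p² − 1) = (p^{d−1} − (−1)^{d−1}) · (p^d − (−1)^d). -/
/-!
Hermitian spaces over the finite field `𝔽_{p²}`: counting subspaces containing
their orthogonal.
-/

noncomputable section

/-- The field with `p²` elements. -/
abbrev Fq (p : ℕ) [Fact p.Prime] : Type := GaloisField p 2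

/-- The hermitian form on `V = (𝔽_{p²})^d` whose Gram matrix is the antidiagonal
matrix `A_d`:  `φ(x,y) = ∑ i, x i * (y (rev i))^p`. -/
def herm (p d : ℕ) [Fact p.Prime] (x y : Fin d → Fq p) : Fq p :=
  ∑ i : Fin d, x i * (y (Fin.rev i)) ^ p

/-- The orthogonal `U^⊥` of a subspace `U` with respect to the hermitian form. -/
def perp (p d : ℕ) [Fact p.Prime] (U : Submodule (Fq p) (Fin d → Fq p)) :
    Submodule (Fq p) (Fin d → Fq p) where
  carrier := {x | ∀ u ∈ U, herm p d x u = 0}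
  add_mem' := by
    intro a b ha hb u hu
    have h : herm p d (a + b) u = herm p d a u + herm p d b u := by
      simp [herm, add_mul, Finset.sum_add_distrib]
    rw [h, ha u hu, hb u hu, add_zero]
  zero_mem' := by
    intro u hu
    simp [herm]
  smul_mem' := by
    intro c x hx u hu
    have h : herm p d (c • x) u = c * herm p d x u := by
      simp [herm, Finset.mul_sum, mul_assoc]
    rw [h, hx u hu, mul_zero]

/-- `ν(r,d)`: the number of `r`-dimensional subspaces `U ⊆ 𝔽_{p²}^d` with `U^⊥ ⊆ U`. -/
def nu (p d r : ℕ) [Fact p.Prime] : ℕ :=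
  Nat.card {U : Submodule (Fq p) (Fin d → Fq p) //
    Module.finrank (Fq p) U = r ∧ perp p d U ≤ U}

/-!
The map `U ↦ U^⊥` identifies the subspaces counted by `ν(d-1,d)` with the isotropic lines, so
`ν(d-1,d) (p² - 1)` is the number of nonzero isotropic vectors. Splitting off the hyperbolic plane
spanned by the first and last coordinates gives the recursion
`N(d+2) = p² N(d) + (p² - 1) p · p^(2d)` for the number `N(d)` of isotropic vectors: the form on
that plane is `a b^p + b a^p`, and for `b ≠ 0` this reduces to the trace `u ↦ u + u^p`, which maps
`𝔽_{p²}` onto `𝔽_p` with fibres of size `p`. The closed formula then follows by induction.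
-/

section FiniteField

variable {K : Type*} [Field K]

open Polynomial in
theorem ncard_pow_eq_mul_le {n : ℕ} (hn : 1 < n) (a : K) :
    {u : K | u ^ n = a * u}.ncard ≤ n := by
  set f : K[X] := X ^ n - C a * X
  have hf : f ≠ 0 := fun h ↦ by
    simpa [f, coeff_X, hn.ne] using congrArg (coeff · n) h
  have hdeg : f.natDegree ≤ n := by
    refine (natDegree_sub_le _ _).trans (max_le (natDegree_X_pow_le n) ?_)
    exact (natDegree_C_mul_le a X).trans (natDegree_X_le.trans hn.le)
  calc {u : K | u ^ n = a * u}.ncard ≤ (f.rootSet K).ncard := by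
        refine Set.ncard_le_ncard (fun u hu ↦ ?_) (rootSet_finite f K)
        simpa [mem_rootSet, hf, f, sub_eq_zero] using hu
    _ ≤ n := (ncard_rootSet_le f K).trans hdeg

theorem pow_pow_eq_self_of_card_eq_sq [Finite K] {p : ℕ} (hK : Nat.card K = p ^ 2) (x : K) :
    (x ^ p) ^ p = x := by
  cases nonempty_fintype K
  rw [← pow_mul, ← sq, ← hK, Nat.card_eq_fintype_card, FiniteField.pow_card]

variable (p : ℕ) [Fact p.Prime] [CharP K p]

variable (K) in
def traceHom : K →+ K := AddMonoidHom.id K + (frobenius K p).toAddMonoidHom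

@[simp]
theorem traceHom_apply (u : K) : traceHom K p u = u + u ^ p := rfl

theorem card_preimage_traceHom [Finite K] (hK : Nat.card K = p ^ 2) {c : K} (hc : c ^ p = c) :
    Nat.card (traceHom K p ⁻¹' {c}) = p := by
  have hp := (Fact.out : p.Prime).one_lt
  set R : Set K := ((traceHom K p).range : Set K)
  have hfix : {u : K | u ^ p = 1 * u}.ncard ≤ p := ncard_pow_eq_mul_le hp 1
  have hker : Nat.card (traceHom K p).ker ≤ p := by
    refine (le_of_eq ?_).trans (ncard_pow_eq_mul_le hp (-1 : K))
    rw [← Nat.card_coe_set_eq]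
    congr! 2
    ext u
    simp [add_eq_zero_iff_eq_neg']
  have hR_sub : R ⊆ {u : K | u ^ p = 1 * u} := by
    rintro _ ⟨u, rfl⟩
    simp [add_pow_char, pow_pow_eq_self_of_card_eq_sq hK, add_comm]
  have hR_card : Nat.card (traceHom K p).range = R.ncard := Nat.card_coe_set_eq R
  have hmul : Nat.card (traceHom K p).ker * Nat.card (traceHom K p).range = p ^ 2 := by
    rw [← AddSubgroup.index_ker, AddSubgroup.card_mul_index, hK]
  have hR : R.ncard ≤ p := (Set.ncard_le_ncard hR_sub).trans hfix
  have hker_eq : Nat.card (traceHom K p).ker = p := by nlinarith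
  have hR_eq : R = {u : K | u ^ p = 1 * u} :=
    Set.eq_of_subset_of_ncard_le hR_sub (hfix.trans (by nlinarith))
  obtain ⟨u, rfl⟩ : c ∈ R := by simpa [hR_eq] using hc
  rw [Nat.card_congr ((traceHom K p).fiberEquivKer u), hker_eq]

theorem card_hyperbolic_fiber_of_ne_zero [Finite K] (hK : Nat.card K = p ^ 2) {a c : K}
    (ha : a ≠ 0) (hc : c ^ p = c) :
    Nat.card {b : K // a * b ^ p + b * a ^ p = c} = p := by
  refine .trans (Nat.card_congr (Equiv.subtypeEquiv
    (Equiv.mulRight₀ (a ^ p) (pow_ne_zero p ha)) fun b ↦ ?_)) (card_preimage_traceHom p hK hc)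
  have : (b * a ^ p) ^ p = a * b ^ p := by
    rw [mul_pow, pow_pow_eq_self_of_card_eq_sq hK, mul_comm]
  simp [this, add_comm]

open Classical in
theorem card_hyperbolic_level [Finite K] (hK : Nat.card K = p ^ 2) {c : K} (hc : c ^ p = c) :
    Nat.card {ab : K × K // ab.1 * ab.2 ^ p + ab.2 * ab.1 ^ p = c} =
      (if c = 0 then p ^ 2 else 0) + (p ^ 2 - 1) * p := by
  cases nonempty_fintype K
  have hfiber (a : K) : Nat.card {b : K // a * b ^ p + b * a ^ p = c} =
      if a = 0 then (if c = 0 then p ^ 2 else 0) else p := by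
    split_ifs with ha hc0
    · subst ha hc0; simpa [(Fact.out : p.Prime).ne_zero] using hK
    · subst ha; simp [(Fact.out : p.Prime).ne_zero, Ne.symm hc0]
    · exact card_hyperbolic_fiber_of_ne_zero p hK ha hc
  rw [Nat.card_congr (Equiv.subtypeProdEquivSigmaSubtype fun a b ↦ a * b ^ p + b * a ^ p = c),
    Nat.card_sigma, Finset.sum_congr rfl fun a _ ↦ hfiber a, Fintype.sum_eq_add_sum_compl 0,
    if_pos rfl, Finset.sum_congr rfl fun a ha ↦ if_neg (by simpa using ha)]
  simp [Finset.card_compl, ← Nat.card_eq_fintype_card, hK]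

end FiniteField

section AntidiagonalForm

variable (K : Type*) [Field K] (d : ℕ)

def antidiagForm : LinearMap.BilinForm K (Fin d → K) :=
  LinearMap.mk₂ K (fun x y ↦ ∑ i, x i * y i.rev)
    (fun _ _ _ ↦ by simp [add_mul, Finset.sum_add_distrib])
    (fun _ _ _ ↦ by simp [Finset.mul_sum, mul_assoc])
    (fun _ _ _ ↦ by simp [mul_add, Finset.sum_add_distrib])
    (fun _ _ _ ↦ by simp [Finset.mul_sum, mul_left_comm])

variable {K d}

theorem antidiagForm_apply (x y : Fin d → K) : antidiagForm K d x y = ∑ i, x i * y i.rev := rfl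

theorem antidiagForm_comm (x y : Fin d → K) : antidiagForm K d x y = antidiagForm K d y x :=
  Fintype.sum_equiv Fin.revPerm _ _ fun i ↦ by simp [mul_comm]

theorem antidiagForm_nondegenerate : (antidiagForm K d).Nondegenerate := by
  refine .ofSeparatingLeft fun x hx ↦ funext fun j ↦ ?_
  simpa [antidiagForm_apply, Pi.single_apply, Fin.rev_eq_iff] using hx (Pi.single j.rev 1)

end AntidiagonalForm

section FrobeniusPi

variable (K : Type*) [Field K] (p : ℕ) [ExpChar K p] [PerfectRing K p] (d : ℕ)

def frobeniusPi : (Fin d → K) →ₛₗ[(frobeniusEquiv K p : K →+* K)] (Fin d → K) where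
  toFun x i := x i ^ p
  map_add' _ _ := funext fun _ ↦ add_pow_expChar ..
  map_smul' c x := funext fun i ↦ mul_pow c (x i) p

variable {K p d}

theorem frobeniusPi_injective : Function.Injective (frobeniusPi K p d) := fun _ _ h ↦
  funext fun i ↦ (frobeniusEquiv K p).injective (congrFun h i)

theorem finrank_map_frobeniusPi (U : Submodule K (Fin d → K)) :
    Module.finrank K (U.map (frobeniusPi K p d)) = Module.finrank K U := by
  have := RingHomInvPair.of_ringEquiv (frobeniusEquiv K p)
  have := RingHomInvPair.of_ringEquiv_symm (frobeniusEquiv K p)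
  refine congrArg Cardinal.toNat (rank_eq_of_equiv_equiv (frobeniusEquiv K p)
    (U.equivMapOfInjective _ frobeniusPi_injective).toAddEquiv
    (frobeniusEquiv K p).bijective fun c x ↦ ?_).symm
  exact map_smulₛₗ (U.equivMapOfInjective _ frobeniusPi_injective) c x

end FrobeniusPi

section Hermitian

variable {p : ℕ} [Fact p.Prime] {d : ℕ}

theorem card_Fq : Nat.card (Fq p) = p ^ 2 := GaloisField.card p 2 two_ne_zero

theorem herm_swap (x y : Fin d → Fq p) : herm p d y x = herm p d x y ^ p := by
  simp only [herm, sum_pow_char, mul_pow, pow_pow_eq_self_of_card_eq_sq card_Fq]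
  exact Fintype.sum_equiv Fin.revPerm _ _ fun i ↦ by simp [mul_comm]

theorem herm_self_pow (x : Fin d → Fq p) : herm p d x x ^ p = herm p d x x :=
  (herm_swap x x).symm

theorem herm_smul_right (c : Fq p) (x y : Fin d → Fq p) :
    herm p d x (c • y) = c ^ p * herm p d x y := by
  simp [herm, Finset.mul_sum, mul_pow, mul_left_comm]

theorem herm_eq_antidiagForm (x y : Fin d → Fq p) :
    herm p d x y = antidiagForm (Fq p) d x (frobeniusPi (Fq p) p d y) := rfl

theorem perp_eq_orthogonal (U : Submodule (Fq p) (Fin d → Fq p)) :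
    perp p d U = (antidiagForm (Fq p) d).orthogonal (U.map (frobeniusPi (Fq p) p d)) := by
  ext x
  simp only [LinearMap.BilinForm.mem_orthogonal_iff, Submodule.mem_map, forall_exists_index,
    and_imp, forall_apply_eq_imp_iff₂, antidiagForm_comm _ x, ← herm_eq_antidiagForm]
  rfl

theorem finrank_perp (U : Submodule (Fq p) (Fin d → Fq p)) :
    Module.finrank (Fq p) (perp p d U) = d - Module.finrank (Fq p) U := by
  rw [perp_eq_orthogonal, LinearMap.BilinForm.finrank_orthogonal antidiagForm_nondegenerate,
    finrank_map_frobeniusPi, Module.finrank_fin_fun]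

theorem perp_perp (U : Submodule (Fq p) (Fin d → Fq p)) : perp p d (perp p d U) = U := by
  refine (Submodule.eq_of_le_of_finrank_le (fun u hu x hx ↦ ?_) ?_).symm
  · rw [herm_swap, hx u hu, zero_pow (Fact.out : p.Prime).ne_zero]
  · have := U.finrank_le
    rw [Module.finrank_fin_fun] at this
    rw [finrank_perp, finrank_perp]
    omega

theorem nu_pred_eq_card_isotropic_lines (hd : 1 ≤ d) :
    nu p d (d - 1) = Nat.card {W : Submodule (Fq p) (Fin d → Fq p) //
      Module.finrank (Fq p) W = 1 ∧ W ≤ perp p d W} := by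
  refine Nat.card_congr <|
    Equiv.subtypeEquiv ⟨perp p d, perp p d, perp_perp, perp_perp⟩ fun U ↦ ?_
  have := U.finrank_le
  rw [Module.finrank_fin_fun] at this
  simp only [Equiv.coe_fn_mk, finrank_perp, perp_perp]
  exact and_congr_left' (by omega)

theorem span_singleton_le_perp_iff (x : Fin d → Fq p) :
    Submodule.span (Fq p) {x} ≤ perp p d (Submodule.span (Fq p) {x}) ↔ herm p d x x = 0 := by
  rw [Submodule.span_singleton_le_iff_mem]
  refine ⟨fun h ↦ h x (Submodule.mem_span_singleton_self x), fun h u hu ↦ ?_⟩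
  obtain ⟨c, rfl⟩ := Submodule.mem_span_singleton.mp hu
  rw [herm_smul_right, h, mul_zero]

variable (p d) in
def numIsotropic : ℕ := Nat.card {x : Fin d → Fq p // herm p d x x = 0}

theorem numIsotropic_eq_card_ne_zero_add_one :
    numIsotropic p d = Nat.card {x : {x : Fin d → Fq p // x ≠ 0} // herm p d x x = 0} + 1 := by
  have h0 : (0 : Fin d → Fq p) ∈ {x : Fin d → Fq p | herm p d x x = 0} := by
    simp [herm, (Fact.out : p.Prime).ne_zero]
  calc numIsotropic p d = {x : Fin d → Fq p | herm p d x x = 0}.ncard := Nat.card_coe_set_eq _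
    _ = ({x : Fin d → Fq p | herm p d x x = 0} \ {0}).ncard + 1 :=
      (Set.ncard_sdiff_singleton_add_one h0).symm
    _ = _ := by
      rw [← Nat.card_coe_set_eq]
      exact congrArg (· + 1) <| Nat.card_congr <|
        (Equiv.subtypeEquivRight fun _ ↦ and_comm).trans
          (Equiv.subtypeSubtypeEquivSubtypeInter (fun x : Fin d → Fq p ↦ x ≠ 0) _).symm

open scoped LinearAlgebra.Projectivization in
theorem numIsotropic_eq_card_isotropic_lines :
    numIsotropic p d = Nat.card {W : Submodule (Fq p) (Fin d → Fq p) //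
      Module.finrank (Fq p) W = 1 ∧ W ≤ perp p d W} * (p ^ 2 - 1) + 1 := by
  have hpoints : {x : {x : Fin d → Fq p // x ≠ 0} // herm p d x x = 0} ≃
      {P : ℙ (Fq p) (Fin d → Fq p) // P.submodule ≤ perp p d P.submodule} × (Fq p)ˣ :=
    (Equiv.subtypeEquiv (Projectivization.nonZeroEquivProjectivizationProdUnits _ _) fun x ↦ by
      rw [← span_singleton_le_perp_iff, ← Projectivization.submodule_mk x.1 x.2]
      rfl).trans Equiv.prodSubtypeFstEquivSubtypeProd
  have hlines : {P : ℙ (Fq p) (Fin d → Fq p) // P.submodule ≤ perp p d P.submodule} ≃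
      {W : Submodule (Fq p) (Fin d → Fq p) // Module.finrank (Fq p) W = 1 ∧ W ≤ perp p d W} :=
    ((Projectivization.equivSubmodule _ _).subtypeEquiv (q := fun W ↦ W.1 ≤ perp p d W.1)
      fun _ ↦ Iff.rfl).trans
      (Equiv.subtypeSubtypeEquivSubtypeInter (fun W ↦ _ = 1) fun W ↦ W ≤ perp p d W)
  rw [numIsotropic_eq_card_ne_zero_add_one, Nat.card_congr hpoints, Nat.card_prod,
    Nat.card_congr hlines, Nat.card_units, card_Fq]

variable (p d) in
def hyperbolicSplit : (Fin d → Fq p) × (Fq p × Fq p) ≃ (Fin (d + 2) → Fq p) :=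
  (Equiv.prodComm _ _).trans <| (Equiv.prodAssoc _ _ _).trans <|
    (Equiv.prodCongr (Equiv.refl _) (Fin.snocEquiv fun _ ↦ Fq p)).trans
      (Fin.consEquiv fun _ ↦ Fq p)

theorem hyperbolicSplit_apply (y : Fin d → Fq p) (a b : Fq p) :
    hyperbolicSplit p d (y, a, b) = Fin.cons a (Fin.snoc y b) := rfl

theorem herm_hyperbolicSplit (y : Fin d → Fq p) (a b : Fq p) :
    herm p (d + 2) (hyperbolicSplit p d (y, a, b)) (hyperbolicSplit p d (y, a, b)) =
      a * b ^ p + b * a ^ p + herm p d y y := by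
  have hrev (i : Fin d) : (i.castSucc.succ : Fin (d + 2)).rev = i.rev.castSucc.succ := by
    ext; simp; omega
  rw [hyperbolicSplit_apply, herm, herm, Fin.sum_univ_succ, Fin.sum_univ_castSucc]
  simp [hrev, Fin.succ_last, Fin.rev_last]
  ring

theorem numIsotropic_zero : numIsotropic p 0 = 1 := by
  simp [numIsotropic, herm]

theorem numIsotropic_one : numIsotropic p 1 = 1 := by
  have (x : Fin 1 → Fq p) : herm p 1 x x = 0 ↔ x = 0 := by
    simp [herm, funext_iff, Fin.forall_fin_one, (Fact.out : p.Prime).ne_zero]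
  simp [numIsotropic, this]

theorem numIsotropic_add_two :
    numIsotropic p (d + 2) = p ^ 2 * numIsotropic p d + (p ^ 2 - 1) * p * p ^ (2 * d) := by
  classical
  have := Fintype.ofFinite (Fq p)
  have hlevel (y : Fin d → Fq p) :
      Nat.card {ab : Fq p × Fq p // ab.1 * ab.2 ^ p + ab.2 * ab.1 ^ p = -herm p d y y} =
        (if herm p d y y = 0 then p ^ 2 else 0) + (p ^ 2 - 1) * p := by
    have hc : (-herm p d y y) ^ p = -herm p d y y := by
      rw [neg_pow, neg_one_pow_char, herm_self_pow, neg_one_mul]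
    rw [card_hyperbolic_level p card_Fq hc, neg_eq_zero]
  have e := (Equiv.subtypeProdEquivSigmaSubtype fun (y : Fin d → Fq p) (ab : Fq p × Fq p) ↦
      ab.1 * ab.2 ^ p + ab.2 * ab.1 ^ p = -herm p d y y).symm.trans
    (Equiv.subtypeEquiv (q := fun x ↦ herm p (d + 2) x x = 0) (hyperbolicSplit p d)
      fun ⟨y, a, b⟩ ↦ by rw [herm_hyperbolicSplit, ← eq_neg_iff_add_eq_zero])
  rw [numIsotropic, ← Nat.card_congr e, Nat.card_sigma, Finset.sum_congr rfl fun y _ ↦ hlevel y]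
  simp only [Finset.sum_add_distrib, Finset.sum_ite, Finset.sum_const_zero, Finset.sum_const,
    smul_eq_mul]
  have hiso : (Finset.univ.filter fun x : Fin d → Fq p ↦ herm p d x x = 0).card =
      numIsotropic p d := by
    rw [numIsotropic, Nat.card_eq_fintype_card, Fintype.card_subtype]
  have hall : (Finset.univ : Finset (Fin d → Fq p)).card = p ^ (2 * d) := by
    rw [Finset.card_univ, ← Nat.card_eq_fintype_card, Nat.card_fun, card_Fq, Nat.card_fin,
      pow_mul]
  rw [hiso, hall]
  ring

theorem numIsotropic_succ (n : ℕ) :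
    (numIsotropic p (n + 1) : ℤ) = (p ^ n - (-1) ^ n) * (p ^ (n + 1) - (-1) ^ (n + 1)) + 1 := by
  have hrec (d : ℕ) : (numIsotropic p (d + 2) : ℤ) =
      p ^ 2 * numIsotropic p d + (p ^ 2 - 1) * p * p ^ (2 * d) := by
    rw [numIsotropic_add_two]
    push_cast [Nat.one_le_pow _ _ (Fact.out : p.Prime).pos]
    ring
  induction n using Nat.twoStepInduction with
  | zero => simp [numIsotropic_one]
  | one => rw [hrec, numIsotropic_zero]; ring
  | more n ih _ =>
    rw [hrec, ih]
    linear_combination (1 - (p : ℤ) ^ 2) * (even_two_mul n).neg_one_pow (α := ℤ)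

end Hermitian

theorem statement1_general (p : ℕ) [Fact p.Prime] (d : ℕ) (hd : 2 ≤ d) :
    (nu p d (d - 1) : ℤ) * ((p : ℤ) ^ 2 - 1) =
      ((p : ℤ) ^ (d - 1) - (-1 : ℤ) ^ (d - 1)) * ((p : ℤ) ^ d - (-1 : ℤ) ^ d) := by
  have hformula := numIsotropic_succ (p := p) (d - 1)
  rw [Nat.sub_add_cancel (by omega : 1 ≤ d), numIsotropic_eq_card_isotropic_lines,
    ← nu_pred_eq_card_isotropic_lines (by omega)] at hformula
  push_cast [Nat.one_le_pow _ _ (Fact.out : p.Prime).pos] at hformula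
  linear_combination hformula

/-- For an odd prime `p` and `d ≥ 2`,
`ν(d−1,d) · (p² − 1) = (p^{d−1} − (−1)^{d−1}) · (p^d − (−1)^d)`. -/
theorem statement1 (p : ℕ) [Fact p.Prime] (hp : Odd p) (d : ℕ) (hd : 2 ≤ d) :
    (nu p d (d - 1) : ℤ) * ((p : ℤ) ^ 2 - 1) =
      ((p : ℤ) ^ (d - 1) - (-1 : ℤ) ^ (d - 1)) * ((p : ℤ) ^ d - (-1 : ℤ) ^ d) :=
  statement1_general p d hd
end
end

section
/- Let i ∈ ℤ with ni even. Let r_{−m},…,r_{−1},r₁,…,r_m and s be integers as in the context, and let Λ = Λ(r_{−m},…,r_{−1},s,r₁,…,r_m). Then Λ ∈ 𝓛_i if and only if: (a) for all 1 ≤ j ≤ m, r_{−j} + r_j ∈ {i, i+1}; (b) s₀ = ⌊(i+1)/2⌋; and (c) if n is even, s₁ = ⌊i/2⌋. Moreover, when these conditions hold, the type of Λ is t(Λ) = 1 + 2·#{1 ≤ j ≤ m : r_{−j} + r_j = i}. -/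
/-!
The hermitian space `𝐕 = ℚ_{p²}^n` of the unitary Rapoport–Zink space of signature
`(1,n-1)`, its lattices `𝓛_i` with their types, and the unitary similitude group
`J = GU(𝐕)`.  Here `ℤ_{p²} = W(𝔽_{p²})` and `ℚ_{p²}` is its fraction field; `σ` is
induced by the Witt vector Frobenius.  Writing `m = ⌊(n-1)/2⌋`, the basis
`e_{-m},…,e_{-1},e₀ˣ,e₁,…,e_m` (odd `n`), resp.
`e_{-m},…,e_{-1},e₀ˣ,e₁ˣ,e₁,…,e_m` (even `n`), is indexed by `Fin n` in this order,
and the Gram matrix of the σ-hermitian form `{·,·}` is the antidiagonal matrix for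
odd `n`, resp. the antidiagonal matrix with middle 2×2 block `diag(1,p)` for even `n`.
-/

noncomputable section

/-- `ℤ_{p²} = W(𝔽_{p²})`, the ring of Witt vectors of the field with `p²` elements. -/
abbrev Zp2 (p : ℕ) [Fact p.Prime] : Type := WittVector p (GaloisField p 2)

/-- `ℚ_{p²}`, the fraction field of `ℤ_{p²}`. -/
abbrev Qp2 (p : ℕ) [Fact p.Prime] : Type := FractionRing (Zp2 p)

/-- The Frobenius `σ` of `ℚ_{p²}`, induced by the Witt vector Frobenius. -/
def frob (p : ℕ) [Fact p.Prime] : Qp2 p ≃+* Qp2 p :=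
  IsFractionRing.ringEquivOfRingEquiv (WittVector.frobeniusEquiv p (GaloisField p 2))

/-- The Gram matrix of the σ-hermitian form `{·,·}` on `𝐕 = ℚ_{p²}^n` in the fixed
basis: for odd `n` it is the antidiagonal matrix; for even `n` the two middle basis
vectors `e₀ˣ, e₁ˣ` (at positions `(n-2)/2` and `(n-2)/2 + 1`) pair with themselves to
`1` and `p` respectively, and all other pairings are antidiagonal. -/
def gram (p n : ℕ) [Fact p.Prime] : Matrix (Fin n) (Fin n) (Qp2 p) :=
  Matrix.of fun i j =>
    if Odd n then (if (i : ℕ) + (j : ℕ) = n - 1 then 1 else 0)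
    else if (i : ℕ) = (n - 2) / 2 ∧ (j : ℕ) = (n - 2) / 2 then 1
    else if (i : ℕ) = (n - 2) / 2 + 1 ∧ (j : ℕ) = (n - 2) / 2 + 1 then (p : Qp2 p)
    else if (i : ℕ) + (j : ℕ) = n - 1 ∧ (i : ℕ) ≠ (n - 2) / 2 ∧ (i : ℕ) ≠ (n - 2) / 2 + 1 then 1
    else 0

/-- The nondegenerate σ-hermitian form `{x,y} = ∑ᵢⱼ xᵢ · gramᵢⱼ · σ(yⱼ)`
(σ-linear in the second variable). -/
def hform (p n : ℕ) [Fact p.Prime] (x y : Fin n → Qp2 p) : Qp2 p :=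
  ∑ i : Fin n, ∑ j : Fin n, x i * gram p n i j * frob p (y j)

/-- A lattice: a finitely generated `ℤ_{p²}`-submodule of `𝐕` containing a
`ℚ_{p²}`-basis of `𝐕`. -/
def IsLattice (p n : ℕ) [Fact p.Prime] (L : Submodule (Zp2 p) (Fin n → Qp2 p)) : Prop :=
  L.FG ∧ Submodule.span (Qp2 p) (L : Set (Fin n → Qp2 p)) = ⊤

/-- The dual lattice `M^∨ = {v : {v,w} ∈ ℤ_{p²} for all w ∈ M}`. -/
def dualLat (p n : ℕ) [Fact p.Prime] (L : Submodule (Zp2 p) (Fin n → Qp2 p)) :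
    Submodule (Zp2 p) (Fin n → Qp2 p) where
  carrier := {v | ∀ w ∈ L, hform p n v w ∈ (algebraMap (Zp2 p) (Qp2 p)).range}
  add_mem' := by
    intro a b ha hb w hw
    have h : hform p n (a + b) w = hform p n a w + hform p n b w := by
      simp [hform, add_mul, Finset.sum_add_distrib]
    rw [h]
    exact add_mem (ha w hw) (hb w hw)
  zero_mem' := by
    intro w hw
    have h : hform p n 0 w = 0 := by simp [hform]
    rw [h]
    exact zero_mem _
  smul_mem' := by
    intro c v hv w hw
    have h : hform p n (c • v) w = algebraMap (Zp2 p) (Qp2 p) c * hform p n v w := by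
      simp [hform, Finset.mul_sum, Algebra.smul_def, mul_assoc]
    rw [h]
    exact mul_mem (RingHom.mem_range_self _ c) (hv w hw)

/-- The scaled lattice `c · L = {c • x : x ∈ L}`. -/
def scaleLat (p n : ℕ) [Fact p.Prime] (c : Qp2 p) (L : Submodule (Zp2 p) (Fin n → Qp2 p)) :
    Submodule (Zp2 p) (Fin n → Qp2 p) :=
  L.map (LinearMap.restrictScalars (Zp2 p) (LinearMap.lsmul (Qp2 p) (Fin n → Qp2 p) c))

/-- `Λ ∈ 𝓛_i`:  `Λ` is a lattice with `p^{i+1}Λ^∨ ⊊ Λ ⊆ p^{i}Λ^∨`. -/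
def inL (p n : ℕ) [Fact p.Prime] (i : ℤ) (Λ : Submodule (Zp2 p) (Fin n → Qp2 p)) : Prop :=
  IsLattice p n Λ ∧
    scaleLat p n ((p : Qp2 p) ^ (i + 1)) (dualLat p n Λ) < Λ ∧
    Λ ≤ scaleLat p n ((p : Qp2 p) ^ i) (dualLat p n Λ)

/-- `Λ ∈ 𝓛 = ⋃_{ni even} 𝓛_i`. -/
def inLL (p n : ℕ) [Fact p.Prime] (Λ : Submodule (Zp2 p) (Fin n → Qp2 p)) : Prop :=
  ∃ i : ℤ, Even ((n : ℤ) * i) ∧ inL p n i Λ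

/-- The length of a `ℤ_{p²}`-module (the Krull dimension of its submodule lattice). -/
def mlen (p : ℕ) [Fact p.Prime] (M : Type) [AddCommGroup M] [Module (Zp2 p) M] : ℕ∞ :=
  (Order.krullDim (Submodule (Zp2 p) M)).unbotD 0

/-- The index `[M₂ : M₁]`: the length of the `ℤ_{p²}`-module `M₂ / M₁` (for `M₁ ⊆ M₂`). -/
def relIdx (p n : ℕ) [Fact p.Prime] (M₁ M₂ : Submodule (Zp2 p) (Fin n → Qp2 p)) : ℕ∞ :=
  mlen p (M₂ ⧸ Submodule.comap M₂.subtype M₁)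

/-- The type `t(Λ) = [Λ : p^{i+1} Λ^∨]` of `Λ ∈ 𝓛_i`. -/
def typeOf (p n : ℕ) [Fact p.Prime] (i : ℤ) (Λ : Submodule (Zp2 p) (Fin n → Qp2 p)) : ℕ∞ :=
  relIdx p n (scaleLat p n ((p : Qp2 p) ^ (i + 1)) (dualLat p n Λ)) Λ

/-- `g ∈ J = GU(𝐕)`: a `ℚ_{p²}`-linear automorphism with `{gx,gy} = c(g)·{x,y}` for a
σ-fixed multiplier `c(g) ∈ ℚ_{p²}ˣ`. -/
def inJ (p n : ℕ) [Fact p.Prime] (g : (Fin n → Qp2 p) ≃ₗ[Qp2 p] (Fin n → Qp2 p)) : Prop :=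
  ∃ c : Qp2 p, c ≠ 0 ∧ frob p c = c ∧ ∀ x y, hform p n (g x) (g y) = c * hform p n x y

/-- The image `g(Λ)` of a lattice under a `ℚ_{p²}`-linear automorphism. -/
def mapLat (p n : ℕ) [Fact p.Prime] (g : (Fin n → Qp2 p) ≃ₗ[Qp2 p] (Fin n → Qp2 p))
    (Λ : Submodule (Zp2 p) (Fin n → Qp2 p)) : Submodule (Zp2 p) (Fin n → Qp2 p) :=
  Λ.map (LinearMap.restrictScalars (Zp2 p) g.toLinearMap)

/-- The lattice `Λ(a) = ⟨ p^{a j} e_j : j ⟩` with diagonal exponents `a : Fin n → ℤ`. -/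
def diagLat (p n : ℕ) [Fact p.Prime] (a : Fin n → ℤ) : Submodule (Zp2 p) (Fin n → Qp2 p) :=
  Submodule.span (Zp2 p)
    (Set.range fun j : Fin n => ((p : Qp2 p) ^ (a j)) • (Pi.single j 1 : Fin n → Qp2 p))

/-- The exponent vector of `Λ(r_{-m},…,r_{-1},s,r₁,…,r_m)`:
position `m - j` carries `r_{-j} = rneg j`, position `m` carries `s₀`, position `m+1`
carries `s₁` (even `n` only), and `e_j` (at position `m + j` for odd `n`, `m + 1 + j`
for even `n`) carries `r_j = rpos j`.  Here `m = (n-1)/2`. -/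
def expVec (n : ℕ) (rneg rpos : ℕ → ℤ) (s0 s1 : ℤ) : Fin n → ℤ := fun idx =>
  if (idx : ℕ) < (n - 1) / 2 then rneg ((n - 1) / 2 - (idx : ℕ))
  else if (idx : ℕ) = (n - 1) / 2 then s0
  else if Even n ∧ (idx : ℕ) = (n - 1) / 2 + 1 then s1
  else rpos ((idx : ℕ) - (if Odd n then (n - 1) / 2 else (n - 1) / 2 + 1))

/-!
In the chosen basis the Gram matrix is monomial: `e_k` pairs nontrivially only with one partner
`e_{k'}`, to `p^{ε_k}` with `ε_k ∈ {0, 1}`. So the dual of a diagonal lattice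
`Λ(a) = ⊕ p^{a_k} ℤ_{p²} e_k` is the diagonal lattice with exponents `-ε_k - a_{k'}`, and
`p^{i+1} Λ(a)^∨ = Λ(a + d)` with `d_k = i + 1 - ε_k - a_k - a_{k'}`. The inclusions defining `𝓛_i`
become coordinatewise: `Λ(a) ∈ 𝓛_i` iff every `d_k ∈ {0, 1}` and some `d_k = 1`, and then
`Λ(a) / Λ(a + d) ≅ ⊕ ℤ_{p²} / p^{d_k}` has length `∑ d_k`. The pair `e_{±j}` has gap
`i + 1 - r_{-j} - r_j`; the middle vectors `e₀ˣ`, `e₁ˣ` have gaps `i + 1 - 2 s₀` and `i - 2 s₁`,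
which lie in `{0, 1}` exactly when `s₀ = ⌊(i+1)/2⌋` and `s₁ = ⌊i/2⌋`, and then add up to `1`
because `ni` is even.
-/

open Submodule

section DiagonalLattice

variable {R : Type*} (K : Type*) {ι : Type*} [CommRing R] [Field K] [Algebra R K] {ϖ : R}

def diagonalLattice (ϖ : R) (a : ι → ℤ) : Submodule R (ι → K) :=
  Submodule.pi Set.univ fun k => R ∙ algebraMap R K ϖ ^ a k

variable {K}

@[simp]
lemma mem_diagonalLattice_iff {a : ι → ℤ} {v : ι → K} :
    v ∈ diagonalLattice K ϖ a ↔ ∀ k, v k ∈ R ∙ algebraMap R K ϖ ^ a k := by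
  simp [diagonalLattice, mem_pi]

lemma single_mem_diagonalLattice_iff [DecidableEq ι] {a : ι → ℤ} {k : ι} {x : K} :
    Pi.single k x ∈ diagonalLattice K ϖ a ↔ x ∈ R ∙ algebraMap R K ϖ ^ a k := by
  refine ⟨fun h => by simpa using (mem_pi.mp h) k trivial, fun h => mem_pi.mpr fun j _ => ?_⟩
  rcases eq_or_ne j k with rfl | hjk
  · simpa using h
  · simp [Pi.single_eq_of_ne hjk]

lemma diagonalLattice_eq_span [Finite ι] [DecidableEq ι] (a : ι → ℤ) :
    diagonalLattice K ϖ a = span R (Set.range fun k => Pi.single k (algebraMap R K ϖ ^ a k)) := by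
  rw [diagonalLattice, ← iSup_map_single, span_range_eq_iSup]
  congr! 2 with k
  rw [map_span, Set.image_singleton]
  rfl

lemma diagonalLattice_fg [Finite ι] (a : ι → ℤ) : (diagonalLattice K ϖ a).FG := by
  classical
  rw [diagonalLattice_eq_span]
  exact fg_span (Set.finite_range _)

variable [IsFractionRing R K]

lemma algebraMap_ne_zero_of_irreducible (hϖ : Irreducible ϖ) : algebraMap R K ϖ ≠ 0 :=
  (map_ne_zero_iff _ (IsFractionRing.injective R K)).mpr hϖ.ne_zero

lemma zpow_eq_algebraMap_pow_mul (hϖ : Irreducible ϖ) {z w : ℤ} (h : w ≤ z) :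
    algebraMap R K ϖ ^ z = algebraMap R K (ϖ ^ (z - w).toNat) * algebraMap R K ϖ ^ w := by
  rw [map_pow, ← zpow_natCast, ← zpow_add₀ (algebraMap_ne_zero_of_irreducible hϖ)]
  congr 1
  omega

lemma mem_span_zpow_iff_mul_mem_range (hϖ : Irreducible ϖ) {x : K} {z : ℤ} :
    x ∈ R ∙ algebraMap R K ϖ ^ z ↔ x * algebraMap R K ϖ ^ (-z) ∈ (algebraMap R K).range := by
  have hz : algebraMap R K ϖ ^ z ≠ 0 := zpow_ne_zero _ (algebraMap_ne_zero_of_irreducible hϖ)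
  simp only [mem_span_singleton, RingHom.mem_range, Algebra.smul_def, zpow_neg,
    eq_mul_inv_iff_mul_eq₀ hz]

lemma smul_zpow_mem_span_zpow_iff (hϖ : Irreducible ϖ) {r : R} {z w : ℤ} (h : z ≤ w) :
    r • algebraMap R K ϖ ^ z ∈ R ∙ algebraMap R K ϖ ^ w ↔ ϖ ^ (w - z).toNat ∣ r := by
  have hz : algebraMap R K ϖ ^ z ≠ 0 := zpow_ne_zero _ (algebraMap_ne_zero_of_irreducible hϖ)
  simp only [mem_span_singleton, zpow_eq_algebraMap_pow_mul hϖ h, Algebra.smul_def, ← mul_assoc,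
    ← map_mul, mul_left_inj' hz, (IsFractionRing.injective R K).eq_iff, dvd_iff_exists_eq_mul_left]
  exact exists_congr fun s => eq_comm

lemma zpow_mem_span_zpow_iff (hϖ : Irreducible ϖ) {z w : ℤ} :
    algebraMap R K ϖ ^ z ∈ R ∙ algebraMap R K ϖ ^ w ↔ w ≤ z := by
  refine ⟨fun hmem => ?_, fun h => ?_⟩
  · by_contra! h
    have hdvd := (smul_zpow_mem_span_zpow_iff (K := K) (r := 1) hϖ h.le).mp (by rwa [one_smul])
    obtain ⟨e, he⟩ : ∃ e : ℕ, (w - z).toNat = e + 1 := ⟨(w - z).toNat - 1, by omega⟩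
    rw [he, pow_succ] at hdvd
    exact hϖ.not_isUnit (isUnit_of_dvd_one (dvd_of_mul_left_dvd hdvd))
  · rw [zpow_eq_algebraMap_pow_mul hϖ h, ← Algebra.smul_def]
    exact smul_mem _ _ (mem_span_singleton_self _)

lemma diagonalLattice_le_iff (hϖ : Irreducible ϖ) {a b : ι → ℤ} :
    diagonalLattice K ϖ a ≤ diagonalLattice K ϖ b ↔ b ≤ a := by
  classical
  refine ⟨fun h k => ?_, fun h => pi_mono fun k _ => ?_⟩
  · have := h (single_mem_diagonalLattice_iff (k := k) |>.mpr (mem_span_singleton_self _))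
    exact (zpow_mem_span_zpow_iff hϖ).mp (single_mem_diagonalLattice_iff.mp this)
  · exact (span_singleton_le_iff_mem _ _).mpr ((zpow_mem_span_zpow_iff hϖ).mpr (h k))

lemma map_smul_zpow_diagonalLattice [Finite ι] [DecidableEq ι] (hϖ : Irreducible ϖ) (c : ℤ)
    (a : ι → ℤ) :
    (diagonalLattice K ϖ a).map
        ((LinearMap.lsmul K (ι → K) (algebraMap R K ϖ ^ c)).restrictScalars R)
      = diagonalLattice K ϖ (fun k => c + a k) := by
  rw [diagonalLattice_eq_span, diagonalLattice_eq_span, map_span, ← Set.range_comp]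
  congr 2
  funext k
  simp [zpow_add₀ (algebraMap_ne_zero_of_irreducible (K := K) hϖ), ← smul_eq_mul, Pi.single_smul]

lemma span_diagonalLattice_eq_top [Finite ι] (hϖ : Irreducible ϖ) (a : ι → ℤ) :
    span K (diagonalLattice K ϖ a : Set (ι → K)) = ⊤ := by
  classical
  rw [eq_top_iff, ← (Pi.basisFun K ι).span_eq, span_le]
  rintro _ ⟨k, rfl⟩
  have hmem : Pi.single k (algebraMap R K ϖ ^ a k) ∈ diagonalLattice K ϖ a :=
    single_mem_diagonalLattice_iff.mpr (mem_span_singleton_self _)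
  have hbasis : Pi.basisFun K ι k
      = (algebraMap R K ϖ ^ a k)⁻¹ • Pi.single k (algebraMap R K ϖ ^ a k) := by
    rw [← Pi.single_smul, smul_eq_mul,
      inv_mul_cancel₀ (zpow_ne_zero _ (algebraMap_ne_zero_of_irreducible hϖ))]
    simp
  rw [SetLike.mem_coe, hbasis]
  exact smul_mem _ _ (subset_span hmem)

variable [IsDomain R]

variable (K) in
def diagonalLatticeEquiv (hϖ : Irreducible ϖ) (a : ι → ℤ) :
    (ι → R) ≃ₗ[R] diagonalLattice K ϖ a :=
  LinearEquiv.ofBijective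
    ((LinearMap.pi fun k => (LinearMap.toSpanSingleton R K (algebraMap R K ϖ ^ a k)).comp
      (LinearMap.proj k)).codRestrict _
        fun r => mem_pi.mpr fun k _ => mem_span_singleton.mpr ⟨r k, rfl⟩)
    ⟨fun r s h => funext fun k => smul_left_injective R
        (zpow_ne_zero (a k) (algebraMap_ne_zero_of_irreducible (K := K) hϖ))
        (congr_fun (congr_arg Subtype.val h) k),
      fun v => by
        choose r hr using fun k => mem_span_singleton.mp (mem_pi.mp v.2 k trivial)
        exact ⟨r, Subtype.ext (funext hr)⟩⟩

@[simp]
lemma diagonalLatticeEquiv_apply (hϖ : Irreducible ϖ) (a : ι → ℤ) (r : ι → R) (k : ι) :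
    (diagonalLatticeEquiv K hϖ a r : ι → K) k = r k • algebraMap R K ϖ ^ a k := rfl

lemma length_quotient_diagonalLattice [Fintype ι] [DecidableEq ι] [IsDiscreteValuationRing R]
    (hϖ : Irreducible ϖ) {a b : ι → ℤ} (hab : a ≤ b) :
    Module.length R
        (diagonalLattice K ϖ a ⧸ (diagonalLattice K ϖ b).comap (diagonalLattice K ϖ a).subtype)
      = ∑ k, ((b k - a k).toNat : ℕ∞) := by
  let I : ι → Ideal R := fun k => IsLocalRing.maximalIdeal R ^ (b k - a k).toNat
  have hker : ((diagonalLattice K ϖ b).comap (diagonalLattice K ϖ a).subtype).map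
      (diagonalLatticeEquiv K hϖ a).symm.toLinearMap = Submodule.pi Set.univ I := by
    ext r
    rw [map_equiv_eq_comap_symm, LinearEquiv.symm_symm, mem_comap, mem_comap, mem_pi]
    simp only [subtype_apply, LinearEquiv.coe_coe, mem_diagonalLattice_iff,
      diagonalLatticeEquiv_apply, smul_zpow_mem_span_zpow_iff hϖ (hab _), I, hϖ.maximalIdeal_eq,
      Ideal.span_singleton_pow, Ideal.mem_span_singleton, Set.mem_univ, true_imp_iff]
  rw [(Submodule.Quotient.equiv _ _ _ hker).length_eq, (Submodule.quotientPi I).length_eq,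
    Module.length_pi_of_fintype]
  simp [I, IsDiscreteValuationRing.length_quotient_pow_maximalIdeal]

end DiagonalLattice

lemma Zp2.irreducible_natCast (p : ℕ) [Fact p.Prime] : Irreducible (p : Zp2 p) :=
  WittVector.irreducible p

namespace Qp2

variable {p : ℕ} [Fact p.Prime]

lemma natCast_eq_algebraMap : (p : Qp2 p) = algebraMap (Zp2 p) (Qp2 p) p :=
  (map_natCast _ p).symm

lemma natCast_ne_zero : (p : Qp2 p) ≠ 0 := by
  rw [natCast_eq_algebraMap]
  exact algebraMap_ne_zero_of_irreducible (Zp2.irreducible_natCast p)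

lemma frob_algebraMap (r : Zp2 p) :
    frob p (algebraMap (Zp2 p) (Qp2 p) r)
      = algebraMap (Zp2 p) (Qp2 p) (WittVector.frobeniusEquiv p (GaloisField p 2) r) :=
  IsFractionRing.ringEquivOfRingEquiv_algebraMap _ _

end Qp2

def gramPartner (n : ℕ) (k : Fin n) : Fin n :=
  if Even n ∧ ((k : ℕ) = (n - 1) / 2 ∨ (k : ℕ) = (n - 1) / 2 + 1) then k else k.rev

def gramExp (n : ℕ) (k : Fin n) : ℤ :=
  if Even n ∧ (k : ℕ) = (n - 1) / 2 + 1 then 1 else 0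

lemma gramPartner_involutive (n : ℕ) : Function.Involutive (gramPartner n) := fun k => by
  have := k.2
  simp only [gramPartner, Fin.ext_iff, Nat.even_iff]
  split_ifs <;> simp_all [Fin.val_rev]
  omega

lemma gramExp_gramPartner (n : ℕ) (k : Fin n) : gramExp n (gramPartner n k) = gramExp n k := by
  have := k.2
  simp only [gramPartner, gramExp, Nat.even_iff]
  split_ifs <;> simp_all [Fin.val_rev]
  omega

lemma eq_gramPartner_comm {n : ℕ} {j k : Fin n} : j = gramPartner n k ↔ k = gramPartner n j := by
  constructor <;> rintro rfl <;> rw [gramPartner_involutive]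

lemma gram_apply (p n : ℕ) [Fact p.Prime] (k j : Fin n) :
    gram p n k j = if j = gramPartner n k then (p : Qp2 p) ^ gramExp n k else 0 := by
  have := k.2
  have := j.2
  simp only [gram, Matrix.of_apply, gramPartner, gramExp, Fin.ext_iff, apply_ite Fin.val,
    Fin.val_rev, Nat.even_iff, Nat.odd_iff]
  split_ifs <;> first | (exfalso; omega) | simp

section Lattices

variable {p n : ℕ} [Fact p.Prime]

lemma hform_add_right (v w w' : Fin n → Qp2 p) :
    hform p n v (w + w') = hform p n v w + hform p n v w' := by
  simp [hform, mul_add, Finset.sum_add_distrib]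

lemma hform_smul_right (v w : Fin n → Qp2 p) (r : Zp2 p) :
    hform p n v (r • w) = frob p (algebraMap (Zp2 p) (Qp2 p) r) * hform p n v w := by
  simp only [hform, Finset.mul_sum, Pi.smul_apply, Algebra.smul_def, map_mul]
  exact Finset.sum_congr rfl fun _ _ => Finset.sum_congr rfl fun _ _ => by ring

lemma hform_single (v : Fin n → Qp2 p) (j : Fin n) (x : Qp2 p) :
    hform p n v (Pi.single j x) = v (gramPartner n j) * (p : Qp2 p) ^ gramExp n j * frob p x := by
  simp [hform, Pi.single_apply, gram_apply, eq_gramPartner_comm, apply_ite (frob p),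
    gramExp_gramPartner]

lemma mem_dualLat_span_iff {S : Set (Fin n → Qp2 p)} {v : Fin n → Qp2 p} :
    v ∈ dualLat p n (span (Zp2 p) S) ↔
      ∀ w ∈ S, hform p n v w ∈ (algebraMap (Zp2 p) (Qp2 p)).range := by
  refine ⟨fun h w hw => h w (subset_span hw), fun h => ?_⟩
  let integralPairing : Submodule (Zp2 p) (Fin n → Qp2 p) :=
    { carrier := {w | hform p n v w ∈ (algebraMap (Zp2 p) (Qp2 p)).range}
      add_mem' := fun hw hw' => by
        simpa only [Set.mem_ofPred_eq, hform_add_right] using add_mem hw hw'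
      zero_mem' := by simp [hform]
      smul_mem' := fun r w hw => by
        simpa only [Set.mem_ofPred_eq, hform_smul_right, Qp2.frob_algebraMap] using
          mul_mem (RingHom.mem_range_self _ _) hw }
  exact span_le (p := integralPairing) |>.mpr h

lemma dualLat_diagonalLattice (a : Fin n → ℤ) :
    dualLat p n (diagonalLattice (Qp2 p) (p : Zp2 p) a)
      = diagonalLattice (Qp2 p) (p : Zp2 p) fun k => -gramExp n k - a (gramPartner n k) := by
  have hinv := gramPartner_involutive n
  ext v
  rw [diagonalLattice_eq_span, mem_dualLat_span_iff, Set.forall_mem_range, mem_diagonalLattice_iff,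
    hinv.surjective.forall]
  refine forall_congr' fun k => ?_
  rw [hform_single, mem_span_zpow_iff_mul_mem_range (Zp2.irreducible_natCast p),
    ← Qp2.natCast_eq_algebraMap, map_zpow₀, map_natCast, hinv, gramExp_gramPartner, mul_assoc,
    ← zpow_add₀ Qp2.natCast_ne_zero, neg_sub, sub_neg_eq_add, add_comm (gramExp n k)]

lemma diagLat_eq_diagonalLattice (a : Fin n → ℤ) :
    diagLat p n a = diagonalLattice (Qp2 p) (p : Zp2 p) a := by
  rw [diagLat, diagonalLattice_eq_span, ← Qp2.natCast_eq_algebraMap]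
  simp_rw [← Pi.single_smul, smul_eq_mul, mul_one]

lemma isLattice_diagonalLattice (a : Fin n → ℤ) :
    IsLattice p n (diagonalLattice (Qp2 p) (p : Zp2 p) a) :=
  ⟨diagonalLattice_fg a, span_diagonalLattice_eq_top (Zp2.irreducible_natCast p) a⟩

lemma scaleLat_dualLat_diagonalLattice (c : ℤ) (a : Fin n → ℤ) :
    scaleLat p n ((p : Qp2 p) ^ c) (dualLat p n (diagonalLattice (Qp2 p) (p : Zp2 p) a))
      = diagonalLattice (Qp2 p) (p : Zp2 p) fun k => c - gramExp n k - a (gramPartner n k) := by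
  rw [dualLat_diagonalLattice, scaleLat, Qp2.natCast_eq_algebraMap,
    map_smul_zpow_diagonalLattice (Zp2.irreducible_natCast p)]
  simp_rw [← add_sub_assoc, sub_eq_add_neg]

lemma mlen_eq_length (M : Type) [AddCommGroup M] [Module (Zp2 p) M] :
    mlen p M = Module.length (Zp2 p) M := by
  rw [mlen, ← Module.coe_length, WithBot.unbotD_coe]

variable (n) in
/-- `p^{i+1} Λ(a)^∨ = Λ(a + dualGap n i a)`. -/
def dualGap (i : ℤ) (a : Fin n → ℤ) (k : Fin n) : ℤ :=
  i + 1 - gramExp n k - a k - a (gramPartner n k)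

lemma dualGap_gramPartner (i : ℤ) (a : Fin n → ℤ) (k : Fin n) :
    dualGap n i a (gramPartner n k) = dualGap n i a k := by
  rw [dualGap, dualGap, gramPartner_involutive, gramExp_gramPartner]
  ring

lemma inL_diagLat_iff (i : ℤ) (a : Fin n → ℤ) :
    inL p n i (diagLat p n a) ↔
      (∀ k, dualGap n i a k = 0 ∨ dualGap n i a k = 1) ∧ ∃ k, dualGap n i a k = 1 := by
  rw [inL, lt_iff_le_not_ge]
  simp only [diagLat_eq_diagonalLattice, scaleLat_dualLat_diagonalLattice,
    isLattice_diagonalLattice, diagonalLattice_le_iff (Zp2.irreducible_natCast p), Pi.le_def,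
    not_forall, not_le, true_and, dualGap]
  constructor
  · rintro ⟨⟨hle, k, hk⟩, hge⟩
    exact ⟨fun j => by have := hle j; have := hge j; omega, k,
      by have := hle k; have := hge k; omega⟩
  · rintro ⟨h01, k, hk⟩
    exact ⟨⟨fun j => by have := h01 j; omega, k, by omega⟩, fun j => by have := h01 j; omega⟩

lemma typeOf_diagLat {i : ℤ} {a : Fin n → ℤ} (h : ∀ k, 0 ≤ dualGap n i a k) :
    typeOf p n i (diagLat p n a) = ∑ k, ((dualGap n i a k).toNat : ℕ∞) := by
  have hle : a ≤ fun k => i + 1 - gramExp n k - a (gramPartner n k) := fun k => by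
    have := h k
    simp only [dualGap] at this ⊢
    omega
  rw [typeOf, relIdx, diagLat_eq_diagonalLattice, scaleLat_dualLat_diagonalLattice, mlen_eq_length,
    length_quotient_diagonalLattice (Zp2.irreducible_natCast p) hle]
  congr! 2 with k
  rw [dualGap, sub_right_comm]

end Lattices

lemma Finset.sum_range_sub_eq_sum_Icc {M : Type*} [AddCommMonoid M] (g : ℕ → M) (m : ℕ) :
    ∑ y ∈ Finset.range m, g (m - y) = ∑ j ∈ Finset.Icc 1 m, g j := by
  calc ∑ y ∈ Finset.range m, g (m - y) = ∑ y ∈ Finset.range m, g (m - (m - 1 - y)) :=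
        (Finset.sum_range_reflect (fun y => g (m - y)) m).symm
    _ = ∑ y ∈ Finset.Ico 0 m, g (y + 1) :=
        Finset.sum_congr (Finset.range_eq_Ico ..) fun y hy => by
          rw [Finset.mem_Ico] at hy
          congr 1
          omega
    _ = _ := by rw [Finset.sum_Ico_add', zero_add, Finset.Ico_add_one_right_eq_Icc]

lemma Finset.sum_range_eq_head_add_middle_add_tail {M : Type*} [AddCommMonoid M] (F : ℕ → M)
    {m n : ℕ} (h : 2 * m ≤ n) :
    ∑ k ∈ Finset.range n, F k = ∑ y ∈ Finset.range m, F y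
      + ∑ x ∈ Finset.range (n - 2 * m), F (m + x) + ∑ y ∈ Finset.range m, F (n - 1 - y) := by
  obtain ⟨t, rfl⟩ := Nat.exists_eq_add_of_le h
  rw [Nat.add_sub_cancel_left, show 2 * m + t = m + (t + m) by ring, Finset.sum_range_add,
    Finset.sum_range_add, add_assoc]
  congr 2
  rw [← Finset.sum_range_reflect]
  exact Finset.sum_congr rfl fun y hy => by
    rw [Finset.mem_range] at hy
    congr 1
    omega

def AdmissibleExponents (n : ℕ) (i : ℤ) (rneg rpos : ℕ → ℤ) (s0 s1 : ℤ) : Prop :=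
  (∀ j : ℕ, 1 ≤ j → j ≤ (n - 1) / 2 → (rneg j + rpos j = i ∨ rneg j + rpos j = i + 1)) ∧
    s0 = (i + 1) / 2 ∧ (Even n → s1 = i / 2)

section ExpVec

variable {n : ℕ} {rneg rpos : ℕ → ℤ} {s0 s1 : ℤ}

lemma gramPartner_of_lt {k : Fin n} (hk : (k : ℕ) < (n - 1) / 2) : gramPartner n k = k.rev := by
  rw [gramPartner, if_neg (by omega)]

lemma gramExp_of_lt {k : Fin n} (hk : (k : ℕ) < (n - 1) / 2) : gramExp n k = 0 := by
  rw [gramExp, if_neg (by omega)]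

lemma expVec_of_lt {k : Fin n} (hk : (k : ℕ) < (n - 1) / 2) :
    expVec n rneg rpos s0 s1 k = rneg ((n - 1) / 2 - k) := by
  rw [expVec, if_pos hk]

lemma expVec_rev_of_lt {k : Fin n} (hk : (k : ℕ) < (n - 1) / 2) :
    expVec n rneg rpos s0 s1 k.rev = rpos ((n - 1) / 2 - k) := by
  have := k.2
  simp only [expVec, Fin.val_rev, Nat.even_iff, Nat.odd_iff]
  rw [if_neg (by omega), if_neg (by omega), if_neg (by omega)]
  split_ifs <;> congr 1 <;> omega

lemma dualGap_expVec_of_lt (i : ℤ) {k : Fin n} (hk : (k : ℕ) < (n - 1) / 2) :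
    dualGap n i (expVec n rneg rpos s0 s1) k
      = i + 1 - (rneg ((n - 1) / 2 - k) + rpos ((n - 1) / 2 - k)) := by
  rw [dualGap, gramPartner_of_lt hk, gramExp_of_lt hk, expVec_of_lt hk, expVec_rev_of_lt hk]
  ring

lemma dualGap_expVec_rev_of_lt (i : ℤ) {k : Fin n} (hk : (k : ℕ) < (n - 1) / 2) :
    dualGap n i (expVec n rneg rpos s0 s1) k.rev
      = i + 1 - (rneg ((n - 1) / 2 - k) + rpos ((n - 1) / 2 - k)) := by
  rw [← gramPartner_of_lt hk, dualGap_gramPartner, dualGap_expVec_of_lt i hk]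

lemma dualGap_expVec_mid (i : ℤ) {k : Fin n} (hk : (k : ℕ) = (n - 1) / 2) :
    dualGap n i (expVec n rneg rpos s0 s1) k = i + 1 - 2 * s0 := by
  have := k.2
  have hk' : gramPartner n k = k := by
    rw [gramPartner]
    split_ifs with h
    · rfl
    · rw [Nat.even_iff] at h
      ext
      rw [Fin.val_rev]
      omega
  rw [dualGap, hk', gramExp, if_neg (by omega), expVec, if_neg (by omega), if_pos hk]
  ring

lemma dualGap_expVec_mid_succ (i : ℤ) (he : Even n) {k : Fin n}
    (hk : (k : ℕ) = (n - 1) / 2 + 1) :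
    dualGap n i (expVec n rneg rpos s0 s1) k = i - 2 * s1 := by
  rw [dualGap, gramPartner, if_pos ⟨he, Or.inr hk⟩, gramExp, if_pos ⟨he, hk⟩, expVec,
    if_neg (by omega), if_neg (by omega), if_pos ⟨he, hk⟩]
  ring

lemma lt_or_rev_lt_or_mid (k : Fin n) :
    (k : ℕ) < (n - 1) / 2 ∨ (k.rev : ℕ) < (n - 1) / 2 ∨ (k : ℕ) = (n - 1) / 2 ∨
      (Even n ∧ (k : ℕ) = (n - 1) / 2 + 1) := by
  have := k.2
  rw [Fin.val_rev, Nat.even_iff]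
  omega

lemma forall_dualGap_expVec_iff (hn : 1 ≤ n) (i : ℤ) :
    (∀ k, dualGap n i (expVec n rneg rpos s0 s1) k = 0 ∨
        dualGap n i (expVec n rneg rpos s0 s1) k = 1)
      ↔ AdmissibleExponents n i rneg rpos s0 s1 := by
  constructor
  · intro h
    refine ⟨fun j hj1 hjm => ?_, ?_, fun he => ?_⟩
    · have := h ⟨(n - 1) / 2 - j, by omega⟩
      rw [dualGap_expVec_of_lt i (by simp only; omega), Nat.sub_sub_self hjm] at this
      omega
    · have := h ⟨(n - 1) / 2, by omega⟩
      rw [dualGap_expVec_mid i rfl] at this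
      omega
    · have := h ⟨(n - 1) / 2 + 1, by rw [Nat.even_iff] at he; omega⟩
      rw [dualGap_expVec_mid_succ i he rfl] at this
      omega
  · rintro ⟨hr, hs0, hs1⟩ k
    rcases lt_or_rev_lt_or_mid k with hk | hk | hk | ⟨he, hk⟩
    · rw [dualGap_expVec_of_lt i hk]
      have := hr ((n - 1) / 2 - k) (by omega) (by omega)
      omega
    · rw [← Fin.rev_rev k, dualGap_expVec_rev_of_lt i hk]
      have := hr ((n - 1) / 2 - k.rev) (by omega) (by omega)
      omega
    · rw [dualGap_expVec_mid i hk]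
      omega
    · rw [dualGap_expVec_mid_succ i he hk, hs1 he]
      omega

lemma exists_dualGap_expVec_eq_one (hn : 1 ≤ n) {i : ℤ} (hi : Even ((n : ℤ) * i))
    (h : AdmissibleExponents n i rneg rpos s0 s1) :
    ∃ k, dualGap n i (expVec n rneg rpos s0 s1) k = 1 := by
  obtain ⟨-, hs0, hs1⟩ := h
  by_cases hie : Even i
  · refine ⟨⟨(n - 1) / 2, by omega⟩, ?_⟩
    rw [dualGap_expVec_mid i rfl, hs0]
    rw [Int.even_iff] at hie
    omega
  · have he : Even n := (Int.even_coe_nat n).mp ((Int.even_mul.mp hi).resolve_right hie)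
    refine ⟨⟨(n - 1) / 2 + 1, by rw [Nat.even_iff] at he; omega⟩, ?_⟩
    rw [dualGap_expVec_mid_succ i he rfl, hs1 he]
    rw [Int.not_even_iff] at hie
    omega

lemma toNat_dualGap_expVec_of_lt {i : ℤ}
    (hr : ∀ j, 1 ≤ j → j ≤ (n - 1) / 2 → rneg j + rpos j = i ∨ rneg j + rpos j = i + 1)
    {k : Fin n} (hk : (k : ℕ) < (n - 1) / 2) :
    (dualGap n i (expVec n rneg rpos s0 s1) k).toNat
      = if rneg ((n - 1) / 2 - k) + rpos ((n - 1) / 2 - k) = i then 1 else 0 := by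
  have := hr ((n - 1) / 2 - k) (by omega) (by omega)
  rw [dualGap_expVec_of_lt i hk]
  split_ifs <;> omega

lemma toNat_dualGap_expVec_rev_of_lt {i : ℤ}
    (hr : ∀ j, 1 ≤ j → j ≤ (n - 1) / 2 → rneg j + rpos j = i ∨ rneg j + rpos j = i + 1)
    {k : Fin n} (hk : (k : ℕ) < (n - 1) / 2) :
    (dualGap n i (expVec n rneg rpos s0 s1) k.rev).toNat
      = if rneg ((n - 1) / 2 - k) + rpos ((n - 1) / 2 - k) = i then 1 else 0 := by
  rw [dualGap_expVec_rev_of_lt i hk, ← dualGap_expVec_of_lt (s0 := s0) (s1 := s1) i hk]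
  exact toNat_dualGap_expVec_of_lt hr hk

lemma sum_dualGap_expVec (hn : 1 ≤ n) {i : ℤ} (hi : Even ((n : ℤ) * i))
    (h : AdmissibleExponents n i rneg rpos s0 s1) :
    ∑ k, (dualGap n i (expVec n rneg rpos s0 s1) k).toNat
      = 1 + 2 * ((Finset.Icc 1 ((n - 1) / 2)).filter fun j => rneg j + rpos j = i).card := by
  obtain ⟨hr, hs0, hs1⟩ := h
  set m := (n - 1) / 2
  let g : ℕ → ℕ := fun j => if rneg j + rpos j = i then 1 else 0
  let F : ℕ → ℕ := fun k =>
    if hk : k < n then (dualGap n i (expVec n rneg rpos s0 s1) ⟨k, hk⟩).toNat else 0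
  have hlow : ∀ y ∈ Finset.range m, F y = g (m - y) := fun y hy => by
    rw [Finset.mem_range] at hy
    simp only [F, dif_pos (show y < n by omega)]
    exact toNat_dualGap_expVec_of_lt hr (k := ⟨y, _⟩) hy
  have hhigh : ∀ y ∈ Finset.range m, F (n - 1 - y) = g (m - y) := fun y hy => by
    rw [Finset.mem_range] at hy
    simp only [F, dif_pos (show n - 1 - y < n by omega)]
    rw [show (⟨n - 1 - y, _⟩ : Fin n) = Fin.rev ⟨y, by omega⟩ from Fin.ext (by simp; omega)]
    exact toNat_dualGap_expVec_rev_of_lt hr (k := ⟨y, _⟩) hy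
  have hmid : ∑ x ∈ Finset.range (n - 2 * m), F (m + x) = 1 := by
    have hFm : F m = (i + 1 - 2 * s0).toNat := by
      simp only [F, dif_pos (show m < n by omega)]
      rw [dualGap_expVec_mid i rfl]
    rcases Nat.even_or_odd n with he | ho
    · have hF1 : F (m + 1) = (i - 2 * s1).toNat := by
        simp only [F, dif_pos (show m + 1 < n by rw [Nat.even_iff] at he; omega)]
        rw [dualGap_expVec_mid_succ i he rfl]
      rw [show n - 2 * m = 2 by rw [Nat.even_iff] at he; omega, Finset.sum_range_succ,
        Finset.sum_range_one, add_zero, hFm, hF1, hs0, hs1 he]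
      omega
    · have hie : i % 2 = 0 := Int.even_iff.mp <| (Int.even_mul.mp hi).resolve_left fun h =>
        Nat.not_even_iff_odd.mpr ho ((Int.even_coe_nat n).mp h)
      rw [show n - 2 * m = 1 by rw [Nat.odd_iff] at ho; omega, Finset.sum_range_one, add_zero,
        hFm, hs0]
      omega
  calc ∑ k, (dualGap n i (expVec n rneg rpos s0 s1) k).toNat = ∑ k ∈ Finset.range n, F k := by
        rw [← Fin.sum_univ_eq_sum_range]
        simp [F]
    _ = ∑ y ∈ Finset.range m, g (m - y) + 1 + ∑ y ∈ Finset.range m, g (m - y) := by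
        rw [Finset.sum_range_eq_head_add_middle_add_tail F (m := m) (by omega), hmid,
          Finset.sum_congr rfl hlow, Finset.sum_congr rfl hhigh]
    _ = _ := by
        rw [Finset.sum_range_sub_eq_sum_Icc, Finset.sum_boole, Nat.cast_id]
        ring

end ExpVec

/-- `Λ(r_{-m},…,r_{-1},s,r₁,…,r_m) ∈ 𝓛_i` iff
`r_{-j} + r_j ∈ {i, i+1}` for `1 ≤ j ≤ m`, `s₀ = ⌊(i+1)/2⌋`, and `s₁ = ⌊i/2⌋` when `n`
is even; and in that case its type is `1 + 2·#{1 ≤ j ≤ m : r_{-j} + r_j = i}`. -/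
theorem statement8 (p : ℕ) [Fact p.Prime] (n : ℕ) (hn : 1 ≤ n) (i : ℤ)
    (hi : Even ((n : ℤ) * i)) (rneg rpos : ℕ → ℤ) (s0 s1 : ℤ) :
    (inL p n i (diagLat p n (expVec n rneg rpos s0 s1)) ↔
      ((∀ j : ℕ, 1 ≤ j → j ≤ (n - 1) / 2 →
          (rneg j + rpos j = i ∨ rneg j + rpos j = i + 1)) ∧
        s0 = (i + 1) / 2 ∧ (Even n → s1 = i / 2))) ∧
    (((∀ j : ℕ, 1 ≤ j → j ≤ (n - 1) / 2 →
          (rneg j + rpos j = i ∨ rneg j + rpos j = i + 1)) ∧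
        s0 = (i + 1) / 2 ∧ (Even n → s1 = i / 2)) →
      typeOf p n i (diagLat p n (expVec n rneg rpos s0 s1)) =
        ((1 + 2 * ((Finset.Icc 1 ((n - 1) / 2)).filter
            (fun j => rneg j + rpos j = i)).card : ℕ) : ℕ∞)) := by
  change (_ ↔ AdmissibleExponents n i rneg rpos s0 s1) ∧
    (AdmissibleExponents n i rneg rpos s0 s1 → _)
  refine ⟨?_, fun h => ?_⟩
  · rw [inL_diagLat_iff, forall_dualGap_expVec_iff hn]
    exact ⟨And.left, fun h => ⟨h, exists_dualGap_expVec_eq_one hn hi h⟩⟩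
  · have h01 := (forall_dualGap_expVec_iff hn i).mpr h
    rw [typeOf_diagLat fun k => by rcases h01 k with h | h <;> omega,
      ← sum_dualGap_expVec hn hi h, Nat.cast_sum]
end
end
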